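/- If X is a graph-measurable random set in a separable Banach space (not necessarily closed-valued) on a complete probability space, then its pointwise closure ω ↦ cl X(ω) is a random closed set (Effros measurable), and the set of measurable selections of cl X equals the closure in probability of the set of measurable selections of X. -/

import Mathlib

/-!
Write the graph of `C` as the preimage of a Borel set `A'` under `g × id`, where `g` codes
countably many measurable sets of `Ω` into Cantor space. Projections of Borel sets are
analytic, analytic sets in Polish spaces are universally measurable (they are inner regular
by compact sets: bound the coordinates of the Baire-space parametrisation one at a time), and
preimages of universally measurable sets are measurable for a complete measure. This gives the
measurable projection theorem, hence Effros measurability of `C` and of its closure. Writing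
`A'` as a continuous image of Baire space and applying the Kuratowski–Ryll-Nardzewski theorem
to the fibres gives measurable selections of graph-measurable sets; selecting from
`C ω ∩ ball (ξ ω) (1 / (n + 1))` approximates any measurable selection `ξ` of `closure C`
almost surely, and conversely limits in probability are almost sure limits along a subsequence.
-/

open MeasureTheory Set Filter Topology ENNReal

section AnalyticSet

variable {Y : Type*} [MeasurableSpace Y]

lemma exists_measure_image_le_measure_image_inter_add (ν : Measure Y) [IsFiniteMeasure ν]
    (f : (ℕ → ℕ) → Y) (B : Set (ℕ → ℕ)) (k : ℕ) {ε : ℝ≥0∞} (hε : ε ≠ 0) :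
    ∃ m : ℕ, ν (f '' B) ≤ ν (f '' (B ∩ {x | x k ≤ m})) + ε := by
  have hmono : Monotone fun m : ℕ => f '' (B ∩ {x | x k ≤ m}) := fun m₁ m₂ h =>
    image_mono (inter_subset_inter_right _ fun x (hx : x k ≤ m₁) => hx.trans h)
  have hunion : ⋃ m : ℕ, f '' (B ∩ {x | x k ≤ m}) = f '' B := by
    rw [← image_iUnion, ← inter_iUnion, iUnion_eq_univ_iff.2 fun x => ⟨x k, le_refl (x k)⟩,
      inter_univ]
  have hlim := (tendsto_measure_iUnion_atTop (μ := ν) hmono).add (tendsto_const_nhds (x := ε))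
  rw [hunion] at hlim
  exact (hlim.eventually (lt_mem_nhds (ENNReal.lt_add_right (measure_ne_top ν _) hε))).exists.imp
    fun _ => le_of_lt

lemma exists_measure_range_le_measure_image_pi_add (ν : Measure Y) [IsFiniteMeasure ν]
    (f : (ℕ → ℕ) → Y) {ε : ℝ≥0∞} (hε : ε ≠ 0) :
    ∃ s : ℕ → ℕ, ∀ k, ν (range f) ≤ ν (f '' (Iio k).pi fun i => Iic (s i)) + ε := by
  obtain ⟨δ, hδ, hδε⟩ := ENNReal.exists_pos_sum_of_countable' hε ℕ
  choose M hM using fun k B => exists_measure_image_le_measure_image_inter_add ν f B k (hδ k).ne'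
  let E : ℕ → Set (ℕ → ℕ) := fun k => Nat.rec univ (fun k B => B ∩ {x | x k ≤ M k B}) k
  have hE : ∀ k x, x ∈ E k ↔ ∀ i < k, x i ≤ M i (E i) := by
    intro k
    induction k with
    | zero => simp [E]
    | succ k ih =>
      intro x
      change x ∈ E k ∧ x k ≤ M k (E k) ↔ _
      rw [ih x, Nat.forall_lt_succ_right]
  have hchain : ∀ k, ν (range f) ≤ ν (f '' E k) + ∑ i ∈ Finset.range k, δ i := by
    intro k
    induction k with
    | zero => simp [E, image_univ]
    | succ k ih =>
      calc ν (range f) ≤ ν (f '' E k) + ∑ i ∈ Finset.range k, δ i := ih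
        _ ≤ ν (f '' E (k + 1)) + δ k + ∑ i ∈ Finset.range k, δ i := by gcongr; exact hM k (E k)
        _ = ν (f '' E (k + 1)) + ∑ i ∈ Finset.range (k + 1), δ i := by
          rw [Finset.sum_range_succ]; ring
  refine ⟨fun k => M k (E k), fun k => ?_⟩
  calc ν (range f) ≤ ν (f '' E k) + ∑ i ∈ Finset.range k, δ i := hchain k
    _ ≤ ν (f '' E k) + ε := by gcongr; exact (ENNReal.sum_le_tsum _).trans hδε.le
    _ = _ := by congr; ext x; simp [hE]

lemma iInter_closure_image_pi_subset {Z : Type*} [MetricSpace Z] {f : (ℕ → ℕ) → Z}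
    (hf : Continuous f) (s : ℕ → ℕ) :
    ⋂ k, closure (f '' (Iio k).pi fun i => Iic (s i)) ⊆ f '' univ.pi fun i => Iic (s i) := by
  intro y hy
  have hx : ∀ k : ℕ, ∃ x ∈ (Iio k).pi fun i => Iic (s i), dist (f x) y < 1 / (k + 1) := by
    intro k
    obtain ⟨_, ⟨x, hx, rfl⟩, hxy⟩ :=
      Metric.mem_closure_iff.1 (mem_iInter.1 hy k) _ Nat.one_div_pos_of_nat
    exact ⟨x, hx, by rwa [dist_comm]⟩
  choose x hxs hxy using hx
  -- Truncating `x k` at `s` lands in the compact box and changes no coordinate below `k`.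
  obtain ⟨a, ha, φ, hφ, hlim⟩ :=
    (isCompact_univ_pi fun i => (finite_Iic (s i)).isCompact).tendsto_subseq
      (x := fun k i => min (x k i) (s i)) fun k i _ => min_le_right (x k i) (s i)
  have hxa : Tendsto (x ∘ φ) atTop (𝓝 a) := by
    refine tendsto_pi_nhds.2 fun i => (tendsto_pi_nhds.1 hlim i).congr' ?_
    filter_upwards [eventually_gt_atTop i] with j hj
    exact min_eq_left (hxs (φ j) i (hj.trans_le hφ.le_apply))
  have hfy : Tendsto (f ∘ x ∘ φ) atTop (𝓝 y) :=
    tendsto_iff_dist_tendsto_zero.2 <| squeeze_zero (fun _ => dist_nonneg)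
      (fun j => (hxy (φ j)).le) (tendsto_one_div_add_atTop_nhds_zero_nat.comp hφ.tendsto_atTop)
  exact ⟨a, ha, tendsto_nhds_unique ((hf.tendsto a).comp hxa) hfy⟩

variable [TopologicalSpace Y] [TopologicalSpace.MetrizableSpace Y] [OpensMeasurableSpace Y]

lemma exists_isCompact_subset_range_measure_le_add (ν : Measure Y) [IsFiniteMeasure ν]
    {f : (ℕ → ℕ) → Y} (hf : Continuous f) {ε : ℝ≥0∞} (hε : ε ≠ 0) :
    ∃ K, IsCompact K ∧ K ⊆ range f ∧ ν (range f) ≤ ν K + ε := by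
  let := TopologicalSpace.metrizableSpaceMetric Y
  obtain ⟨s, hs⟩ := exists_measure_range_le_measure_image_pi_add ν f hε
  refine ⟨f '' univ.pi fun i => Iic (s i),
    (isCompact_univ_pi fun i => (finite_Iic (s i)).isCompact).image hf, image_subset_range _ _, ?_⟩
  have hanti : Antitone fun k => closure (f '' (Iio k).pi fun i => Iic (s i)) :=
    fun k l hkl => closure_mono (image_mono (pi_mono' (fun _ _ => subset_rfl) (Iio_subset_Iio hkl)))
  have hlim := tendsto_measure_iInter_atTop (fun k => measurableSet_closure.nullMeasurableSet)
    hanti ⟨0, measure_ne_top ν _⟩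
  calc ν (range f) ≤ ν (⋂ k, closure (f '' (Iio k).pi fun i => Iic (s i))) + ε :=
        ge_of_tendsto (hlim.add tendsto_const_nhds) <| Eventually.of_forall fun k =>
          (hs k).trans (add_le_add_left (measure_mono subset_closure) ε)
    _ ≤ ν (f '' univ.pi fun i => Iic (s i)) + ε := by
        gcongr; exact iInter_closure_image_pi_subset hf s

theorem MeasureTheory.AnalyticSet.nullMeasurableSet {S : Set Y} (hS : AnalyticSet S)
    (ν : Measure Y) [IsFiniteMeasure ν] : NullMeasurableSet S ν := by
  rw [AnalyticSet] at hS
  rcases hS with rfl | ⟨f, hf, rfl⟩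
  · exact .empty
  choose K hK hKf hνK using fun n : ℕ =>
    exists_isCompact_subset_range_measure_le_add ν hf (ENNReal.inv_ne_zero.2 (natCast_ne_top n))
  have hB : MeasurableSet (⋃ n, K n) := .iUnion fun n => (hK n).isClosed.measurableSet
  have hBf : ⋃ n, K n ⊆ range f := iUnion_subset hKf
  have hνB : ν (range f) ≤ ν (⋃ n, K n) := ENNReal.le_of_forall_pos_le_add fun ε hε _ => by
    obtain ⟨n, hn⟩ := ENNReal.exists_inv_nat_lt (coe_ne_zero.2 hε.ne')
    exact (hνK n).trans (add_le_add (measure_mono (subset_iUnion K n)) hn.le)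
  have hdiff : ν (range f \ ⋃ n, K n) = 0 := by
    refine nonpos_iff_eq_zero.1 (ENNReal.le_of_add_le_add_left (measure_ne_top ν (⋃ n, K n)) ?_)
    have hsplit := measure_inter_add_sdiff (μ := ν) (range f) hB
    rw [inter_eq_right.2 hBf] at hsplit
    rw [add_zero, hsplit]
    exact hνB
  exact hB.nullMeasurableSet.congr
    (ae_eq_set.2 ⟨by rw [sdiff_eq_empty.2 hBf, measure_empty], hdiff⟩)

theorem MeasureTheory.AnalyticSet.measurableSet_preimage {Ω : Type*} [MeasurableSpace Ω]
    (P : Measure Ω) [IsFiniteMeasure P] [P.IsComplete] {g : Ω → Y} (hg : Measurable g)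
    {S : Set Y} (hS : AnalyticSet S) : MeasurableSet (g ⁻¹' S) :=
  ((hS.nullMeasurableSet (P.map g)).preimage (hg.measurePreserving P).quasiMeasurePreserving)
    |>.measurable_of_complete

end AnalyticSet

theorem MeasurableSet.exists_eq_preimage_prodMap_cantor {Ω β : Type*} [MeasurableSpace Ω]
    [MeasurableSpace β] {A : Set (Ω × β)} (hA : MeasurableSet A) :
    ∃ g : Ω → ℕ → Bool, Measurable g ∧
      ∃ A' : Set ((ℕ → Bool) × β), MeasurableSet A' ∧ A = Prod.map g id ⁻¹' A' := by
  classical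
  rw [← generateFrom_prod] at hA
  induction A, hA using MeasurableSpace.generateFrom_induction with
  | hC _ hst =>
    obtain ⟨s, hs : MeasurableSet s, t, ht : MeasurableSet t, rfl⟩ := hst
    refine ⟨fun ω _ => decide (ω ∈ s), ?_, {y | y 0 = true} ×ˢ t, ?_, ?_⟩
    · exact measurable_pi_lambda _ fun _ => measurable_to_bool (by convert hs; ext; simp)
    · exact (measurableSet_eq_fun (measurable_pi_apply 0) measurable_const).prod ht
    · ext p; simp
  | empty => exact ⟨0, measurable_const, ∅, .empty, rfl⟩
  | compl _ _ ih =>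
    obtain ⟨g, hg, A', hA', rfl⟩ := ih
    exact ⟨g, hg, A'ᶜ, hA'.compl, rfl⟩
  | iUnion _ _ ih =>
    choose g hg A' hA' hgA' using ih
    let π : ℕ → (ℕ → Bool) → ℕ → Bool := fun i y m => y (Nat.pair i m)
    have hπ : ∀ i, Measurable (π i) := fun i =>
      measurable_pi_lambda _ fun m => measurable_pi_apply _
    refine ⟨fun ω n => g n.unpair.1 ω n.unpair.2,
      measurable_pi_lambda _ fun n => measurable_pi_apply _ |>.comp (hg _),
      ⋃ i, Prod.map (π i) id ⁻¹' A' i,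
      .iUnion fun i => ((hπ i).prodMap measurable_id) (hA' i), ?_⟩
    simp only [preimage_iUnion, ← preimage_comp, Prod.map_comp_map, Function.id_comp, hgA']
    congr! with i
    ext ω m
    simp [π]

section Effros

variable {Ω Z : Type*} [MeasurableSpace Ω]

def EffrosMeasurable [TopologicalSpace Z] (Φ : Ω → Set Z) : Prop :=
  ∀ G : Set Z, IsOpen G → MeasurableSet {ω | (Φ ω ∩ G).Nonempty}

lemma EffrosMeasurable.closure [TopologicalSpace Z] {Φ : Ω → Set Z} (hΦ : EffrosMeasurable Φ) :
    EffrosMeasurable fun ω => closure (Φ ω) := fun G hG => by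
  simp_rw [closure_inter_open_nonempty_iff hG]
  exact hΦ G hG

lemma EffrosMeasurable.inter_comp [TopologicalSpace Z] {ι : Type*} [Countable ι]
    [MeasurableSpace ι] [MeasurableSingletonClass ι] {Φ : Ω → Set Z} (hΦ : EffrosMeasurable Φ)
    {ψ : Ω → ι} (hψ : Measurable ψ) {V : ι → Set Z} (hV : ∀ i, IsOpen (V i)) :
    EffrosMeasurable fun ω => Φ ω ∩ V (ψ ω) := fun G hG => by
  have : {ω | (Φ ω ∩ V (ψ ω) ∩ G).Nonempty} =
      ⋃ i, ψ ⁻¹' {i} ∩ {ω | (Φ ω ∩ (V i ∩ G)).Nonempty} := by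
    ext ω; simp [inter_assoc]
  rw [this]
  exact .iUnion fun i => (hψ (measurableSet_singleton i)).inter (hΦ _ ((hV i).inter hG))

section Metric

open Metric

variable [PseudoMetricSpace Z] {Φ : Ω → Set Z} {u : ℕ → Z}

lemma EffrosMeasurable.exists_measurable_index_inter_ball (hΦ : EffrosMeasurable Φ)
    (hu : DenseRange u) {r : ℝ} (hr : 0 < r) :
    ∃ ψ : Ω → ℕ, Measurable ψ ∧ ∀ ω, (Φ ω).Nonempty → (Φ ω ∩ ball (u (ψ ω)) r).Nonempty := by
  classical
  have hex : ∀ ω, ∃ n, (Φ ω).Nonempty → (Φ ω ∩ ball (u n) r).Nonempty := by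
    intro ω
    by_cases h : (Φ ω).Nonempty
    · obtain ⟨z, hz⟩ := h
      obtain ⟨n, hn⟩ := hu.exists_dist_lt z hr
      exact ⟨n, fun _ => ⟨z, hz, hn⟩⟩
    · exact ⟨0, fun h' => absurd h' h⟩
  refine ⟨fun ω => Nat.find (hex ω), measurable_find hex fun n => ?_,
    fun ω => Nat.find_spec (hex ω)⟩
  exact .imp (by simpa using hΦ univ isOpen_univ) (hΦ _ isOpen_ball)

lemma EffrosMeasurable.exists_seq_measurable_index (hΦ : EffrosMeasurable Φ)
    (hu : DenseRange u) :
    ∃ ψ : ℕ → Ω → ℕ, (∀ k, Measurable (ψ k)) ∧ ∀ ω, (Φ ω).Nonempty → ∀ k,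
      (Φ ω ∩ ball (u (ψ k ω)) (2⁻¹ ^ k) ∩ ball (u (ψ (k + 1) ω)) (2⁻¹ ^ (k + 1))).Nonempty := by
  have hr : ∀ k : ℕ, (0 : ℝ) < 2⁻¹ ^ k := fun k => by positivity
  obtain ⟨ψ₀, hψ₀, hψ₀Φ⟩ := hΦ.exists_measurable_index_inter_ball hu (hr 0)
  have step : ∀ (k : ℕ) (ψ : {ψ : Ω → ℕ // Measurable ψ}),
      ∃ ψ' : {ψ : Ω → ℕ // Measurable ψ}, ∀ ω, (Φ ω ∩ ball (u (ψ.1 ω)) (2⁻¹ ^ k)).Nonempty →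
        (Φ ω ∩ ball (u (ψ.1 ω)) (2⁻¹ ^ k) ∩ ball (u (ψ'.1 ω)) (2⁻¹ ^ (k + 1))).Nonempty :=
    fun k ψ =>
      have ⟨ψ', hψ', h⟩ := (hΦ.inter_comp ψ.2 fun _ => isOpen_ball)
        |>.exists_measurable_index_inter_ball hu (hr (k + 1))
      ⟨⟨ψ', hψ'⟩, h⟩
  choose next hnext using step
  let ψ : ℕ → {ψ : Ω → ℕ // Measurable ψ} := fun k => Nat.rec ⟨ψ₀, hψ₀⟩ next k
  have hψ : ∀ ω, (Φ ω).Nonempty → ∀ k, (Φ ω ∩ ball (u ((ψ k).1 ω)) (2⁻¹ ^ k)).Nonempty := by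
    intro ω hω k
    induction k with
    | zero => exact hψ₀Φ ω hω
    | succ k ih => exact (hnext k (ψ k) ω ih).mono (inter_subset_inter_left _ inter_subset_left)
  exact ⟨fun k => (ψ k).1, fun k => (ψ k).2, fun ω hω k => hnext k (ψ k) ω (hψ ω hω k)⟩

end Metric

theorem EffrosMeasurable.exists_measurable_selection [TopologicalSpace Z] [PolishSpace Z]
    [MeasurableSpace Z] [BorelSpace Z] [Nonempty Z] {Φ : Ω → Set Z} (hΦ : EffrosMeasurable Φ)
    (hcl : ∀ ω, IsClosed (Φ ω)) :
    ∃ σ : Ω → Z, Measurable σ ∧ ∀ ω, (Φ ω).Nonempty → σ ω ∈ Φ ω := by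
  let := TopologicalSpace.upgradeIsCompletelyMetrizable Z
  obtain ⟨u, hu⟩ := TopologicalSpace.exists_dense_seq Z
  obtain ⟨ψ, hψ, hψΦ⟩ := hΦ.exists_seq_measurable_index hu
  refine ⟨fun ω => limUnder atTop fun k => u (ψ k ω), (StronglyMeasurable.limUnder fun k =>
    ((measurable_of_countable u).comp (hψ k)).stronglyMeasurable).measurable, fun ω hω => ?_⟩
  choose z hz using hψΦ ω hω
  have hzk : ∀ k, dist (z k) (u (ψ k ω)) < 2⁻¹ ^ k := fun k => (hz k).1.2
  have hcauchy : CauchySeq fun k => u (ψ k ω) := by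
    refine cauchySeq_of_le_geometric 2⁻¹ 2 (by norm_num) fun k => ?_
    have h1 := hzk k
    have h2 : dist (z k) (u (ψ (k + 1) ω)) < 2⁻¹ ^ (k + 1) := (hz k).2
    calc dist (u (ψ k ω)) (u (ψ (k + 1) ω))
        ≤ dist (z k) (u (ψ k ω)) + dist (z k) (u (ψ (k + 1) ω)) := dist_triangle_left _ _ _
      _ ≤ 2⁻¹ ^ k + 2⁻¹ ^ (k + 1) := by linarith
      _ ≤ 2 * 2⁻¹ ^ k := by rw [pow_succ]; linarith [pow_nonneg (by norm_num : (0 : ℝ) ≤ 2⁻¹) k]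
  obtain ⟨c, hc⟩ := cauchySeq_tendsto_of_complete hcauchy
  dsimp only
  rw [hc.limUnder_eq]
  refine (hcl ω).mem_of_tendsto (tendsto_of_tendsto_of_dist hc ?_) (.of_forall fun k => (hz k).1.1)
  refine squeeze_zero (fun _ => dist_nonneg) (fun k => ?_)
    (tendsto_pow_atTop_nhds_zero_of_lt_one (by norm_num : (0 : ℝ) ≤ 2⁻¹) (by norm_num))
  rw [dist_comm]
  exact (hzk k).le

end Effros

section GraphMeasurable

variable {Ω X : Type*} [MeasurableSpace Ω] [TopologicalSpace X] [PolishSpace X]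
  [MeasurableSpace X] [BorelSpace X]

theorem MeasurableSet.measurableSet_image_fst_of_isComplete {A : Set (Ω × X)}
    (hA : MeasurableSet A) (P : Measure Ω) [IsFiniteMeasure P] [P.IsComplete] :
    MeasurableSet (Prod.fst '' A) := by
  have : PolishSpace (ℕ → Bool) := {}
  obtain ⟨g, hg, A', hA', rfl⟩ := hA.exists_eq_preimage_prodMap_cantor
  have hfst : Prod.fst '' (Prod.map g id ⁻¹' A') = g ⁻¹' (Prod.fst '' A') := by
    ext ω; simp
  rw [hfst]
  exact (hA'.analyticSet_image measurable_fst).measurableSet_preimage P hg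

variable {C : Ω → Set X}

theorem MeasurableSet.effrosMeasurable_of_isComplete
    (hC : MeasurableSet {p : Ω × X | p.2 ∈ C p.1}) (P : Measure Ω) [IsFiniteMeasure P]
    [P.IsComplete] : EffrosMeasurable C := fun G hG => by
  have : {ω | (C ω ∩ G).Nonempty} = Prod.fst '' ({p : Ω × X | p.2 ∈ C p.1} ∩ univ ×ˢ G) := by
    ext ω; simp [Set.Nonempty]
  rw [this]
  exact (hC.inter (MeasurableSet.univ.prod hG.measurableSet))
    |>.measurableSet_image_fst_of_isComplete P

theorem MeasurableSet.exists_measurable_selection_of_isComplete [Nonempty X]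
    (hC : MeasurableSet {p : Ω × X | p.2 ∈ C p.1}) (P : Measure Ω) [IsFiniteMeasure P]
    [P.IsComplete] :
    ∃ ξ : Ω → X, Measurable ξ ∧ ∀ ω, (C ω).Nonempty → ξ ω ∈ C ω := by
  have : PolishSpace (ℕ → Bool) := {}
  obtain ⟨g, hg, A', hA', hCA'⟩ := hC.exists_eq_preimage_prodMap_cantor
  have hC' : ∀ ω x, x ∈ C ω ↔ (g ω, x) ∈ A' := fun ω x => Set.ext_iff.1 hCA' (ω, x)
  have hA'an := hA'.analyticSet
  rw [AnalyticSet] at hA'an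
  rcases hA'an with rfl | ⟨f, hf, rfl⟩
  · exact ⟨fun _ => Classical.arbitrary X, measurable_const, fun ω ⟨x, hx⟩ => by simp [hC'] at hx⟩
  -- Select, measurably in `ω`, a point of the closed fibre of `Prod.fst ∘ f` over `g ω`.
  have hΦ : EffrosMeasurable fun ω => (fun z => (f z).1) ⁻¹' {g ω} := fun G hG => by
    have : {ω | ((fun z => (f z).1) ⁻¹' {g ω} ∩ G).Nonempty} = g ⁻¹' ((fun z => (f z).1) '' G) := by
      ext ω; simp [Set.Nonempty, and_comm]
    rw [this]
    exact (hG.analyticSet_image (continuous_fst.comp hf)).measurableSet_preimage P hg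
  obtain ⟨σ, hσ, hσΦ⟩ := hΦ.exists_measurable_selection fun ω =>
    isClosed_singleton.preimage (continuous_fst.comp hf)
  refine ⟨fun ω => (f (σ ω)).2, (continuous_snd.comp hf).measurable.comp hσ, fun ω ⟨x, hx⟩ => ?_⟩
  obtain ⟨z, hz⟩ := (hC' ω x).1 hx
  have hσω : (f (σ ω)).1 = g ω := hσΦ ω ⟨z, by simp [hz]⟩
  rw [hC', ← hσω]
  exact mem_range_self _

end GraphMeasurable

section ClosureOfSelections

variable {Ω X : Type*} [MeasurableSpace Ω] {P : Measure Ω} {C : Ω → Set X}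

theorem exists_seq_measurable_tendsto_ae_of_ae_mem_closure [MetricSpace X] [CompleteSpace X]
    [TopologicalSpace.SeparableSpace X] [MeasurableSpace X] [BorelSpace X] [Nonempty X]
    [IsFiniteMeasure P] [P.IsComplete] (hC : MeasurableSet {p : Ω × X | p.2 ∈ C p.1})
    {ξ : Ω → X} (hξ : Measurable ξ) (hξC : ∀ᵐ ω ∂P, ξ ω ∈ closure (C ω)) :
    ∃ f : ℕ → Ω → X, (∀ n, Measurable (f n) ∧ ∀ᵐ ω ∂P, f n ω ∈ C ω) ∧
      ∀ᵐ ω ∂P, Tendsto (f · ω) atTop (𝓝 (ξ ω)) := by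
  have hCn : ∀ n : ℕ,
      MeasurableSet {p : Ω × X | p.2 ∈ C p.1 ∩ Metric.ball (ξ p.1) (1 / (n + 1))} := fun n =>
    hC.inter (measurableSet_lt (measurable_snd.dist (hξ.comp measurable_fst)) measurable_const)
  choose f hf hfC using fun n : ℕ =>
    (hCn n).exists_measurable_selection_of_isComplete (C := fun ω => C ω ∩ Metric.ball (ξ ω) _) P
  have hfξ : ∀ᵐ ω ∂P, ∀ n : ℕ, f n ω ∈ C ω ∩ Metric.ball (ξ ω) (1 / (n + 1)) := by
    filter_upwards [hξC] with ω hω n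
    obtain ⟨x, hxC, hx⟩ := Metric.mem_closure_iff.1 hω _ Nat.one_div_pos_of_nat
    exact hfC n ω ⟨x, hxC, Metric.mem_ball'.2 hx⟩
  refine ⟨f, fun n => ⟨hf n, hfξ.mono fun ω h => (h n).1⟩, hfξ.mono fun ω h => ?_⟩
  exact tendsto_iff_dist_tendsto_zero.2 <| squeeze_zero (fun _ => dist_nonneg)
    (fun n => (h n).2.le) tendsto_one_div_add_atTop_nhds_zero_nat

theorem ae_mem_closure_of_tendstoInMeasure [PseudoEMetricSpace X] {f : ℕ → Ω → X} {γ : Ω → X}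
    (hfC : ∀ n, ∀ᵐ ω ∂P, f n ω ∈ C ω) (hfγ : TendstoInMeasure P f atTop γ) :
    ∀ᵐ ω ∂P, γ ω ∈ closure (C ω) := by
  obtain ⟨ns, -, hns⟩ := hfγ.exists_seq_tendsto_ae
  filter_upwards [hns, ae_all_iff.2 hfC] with ω hω hωC
  exact mem_closure_of_tendsto hω (.of_forall fun i => hωC (ns i))

end ClosureOfSelections

theorem stmt3_general {Ω X : Type*} [MeasurableSpace Ω] [NormedAddCommGroup X]
    [CompleteSpace X] [TopologicalSpace.SeparableSpace X] [MeasurableSpace X] [BorelSpace X]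
    (P : Measure Ω) [IsProbabilityMeasure P] (hPc : P.IsComplete)
    (C : Ω → Set X) (hC : MeasurableSet {p : Ω × X | p.2 ∈ C p.1}) :
    (∀ G : Set X, IsOpen G → MeasurableSet {ω | (closure (C ω) ∩ G).Nonempty}) ∧
    {ξ : Ω → X | Measurable ξ ∧ ∀ᵐ ω ∂P, ξ ω ∈ closure (C ω)} =
      {γ : Ω → X | Measurable γ ∧ ∃ f : ℕ → Ω → X,
        (∀ n, Measurable (f n) ∧ ∀ᵐ ω ∂P, f n ω ∈ C ω) ∧
        TendstoInMeasure P f Filter.atTop γ} := by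
  have := hPc
  refine ⟨(hC.effrosMeasurable_of_isComplete P).closure, Set.ext fun ξ => ⟨?_, ?_⟩⟩
  · rintro ⟨hξ, hξC⟩
    obtain ⟨f, hf, hfξ⟩ := exists_seq_measurable_tendsto_ae_of_ae_mem_closure hC hξ hξC
    exact ⟨hξ, f, hf, tendstoInMeasure_of_tendsto_ae (fun n => (hf n).1.aestronglyMeasurable) hfξ⟩
  · rintro ⟨hγ, f, hf, hfγ⟩
    exact ⟨hγ, ae_mem_closure_of_tendstoInMeasure (fun n => (hf n).2) hfγ⟩

/-- Proposition 2.6: the pointwise closure of a graph-measurable random set is an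
Effros-measurable random closed set, and its measurable selections are the closure in
probability of the measurable selections of the original set. -/
theorem stmt3 {Ω X : Type*} [MeasurableSpace Ω] [NormedAddCommGroup X] [NormedSpace ℝ X]
    [CompleteSpace X] [TopologicalSpace.SeparableSpace X] [MeasurableSpace X] [BorelSpace X]
    (P : Measure Ω) [IsProbabilityMeasure P] (hPc : P.IsComplete)
    (C : Ω → Set X) (hC : MeasurableSet {p : Ω × X | p.2 ∈ C p.1}) :
    (∀ G : Set X, IsOpen G → MeasurableSet {ω | (closure (C ω) ∩ G).Nonempty}) ∧
    {ξ : Ω → X | Measurable ξ ∧ ∀ᵐ ω ∂P, ξ ω ∈ closure (C ω)} =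
      {γ : Ω → X | Measurable γ ∧ ∃ f : ℕ → Ω → X,
        (∀ n, Measurable (f n) ∧ ∀ᵐ ω ∂P, f n ω ∈ C ω) ∧
        TendstoInMeasure P f Filter.atTop γ} :=
  stmt3_general P hPc C hC
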